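/- Suppose f ∈ F[x_1,...,x_n] satisfies f ∈ I(s, m(s)) for all s ∈ S except for at least one point s* ∈ D = D_1 × ⋯ × D_n with f ∉ I(s*, m(s*)). Then deg f ≥ Σ_{i=1}^n (d(S_i) − d(D_i)), where d(D_i) = Σ_{s ∈ D_i} m_i(s). -/

import Mathlib

open MvPolynomial

/-- The Taylor coefficient `f_u(s)`: the coefficient of `x^u` in `f(x + s)`. -/
noncomputable def taylorCoeff {F : Type*} [Field F] {n : ℕ}
    (f : MvPolynomial (Fin n) F) (s : Fin n → F) (u : Fin n →₀ ℕ) : F :=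
  coeff u (aeval (fun i => X i + C (s i)) f)

/-- Membership in the ideal `I(s, w)`: all Taylor coefficients `f_u(s)` with
`u < w` (componentwise) vanish. -/
def memPointIdeal {F : Type*} [Field F] {n : ℕ}
    (f : MvPolynomial (Fin n) F) (s : Fin n → F) (w : Fin n → ℕ) : Prop :=
  ∀ u : Fin n →₀ ℕ, (∀ i, u i < w i) → taylorCoeff f s u = 0

/-- The polynomial `g_i(x_i) = ∏_{s ∈ S_i} (x_i - s)^{m_i(s)}`. -/
noncomputable def gPoly {F : Type*} [Field F] {n : ℕ}
    (S : Fin n → Finset F) (m : Fin n → F → ℕ) (i : Fin n) : MvPolynomial (Fin n) F :=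
  ∏ s ∈ S i, (X i - C s) ^ m i s

/-- The size `d_i = Σ_{s ∈ S_i} m_i(s)` of the multiset `(S_i, m_i)`. -/
def dSize {F : Type*} {n : ℕ} (S : Fin n → Finset F) (m : Fin n → F → ℕ) (i : Fin n) : ℕ :=
  ∑ s ∈ S i, m i s

/-!
Induction on `n`. View `f` as a polynomial in `x_0` over `R = F[x_1, …, x_n]` and divide it by the
monic `q = ∏_{c ∈ S_0 \ D_0} (x_0 - c)^{m_0(c)}` of degree `d(S_0) - d(D_0)`: `f = r + q h`.
The condition `f ∈ I((c, t), m(c, t))` says exactly that `(x_0 - c)^{m_0(c)}` divides `f` modulo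
`I(t, m(t))`. Hence, for every `t` in the tail grid, `q` divides `f` modulo `I(t, m(t))`, so that
`f ≡ q h` there; as `q` is coprime to `(x_0 - c)^w` for `c ∉ S_0 \ D_0`, the powers of `x_0 - c`
dividing `f` and `h` agree modulo `I(t, m(t))`. For the exceptional point `(c, t*)` this yields a
Taylor coefficient `g` of `h` in `x_0` at `c` which satisfies the hypotheses on the tail grid, so
`deg g ≥ Σ_{i ≥ 1} (d(S_i) - d(D_i))` by induction. Finally `deg f ≥ deg q + deg g`: for a top
monomial `x^u` of `g`, the `x^u`-coefficient of `h` is a nonzero polynomial in `x_0`, and the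
leading term of its product with `q` cannot be cancelled by `r`.
-/

theorem Fin.apply_cons_eq_cons {n : ℕ} {α β : Type*} (m : Fin (n + 1) → α → β) (c : α)
    (t : Fin n → α) :
    (fun i => m i ((Fin.cons c t : Fin (n + 1) → α) i)) =
      Fin.cons (m 0 c) fun i => m i.succ (t i) := by
  funext i
  cases i using Fin.cases <;> rfl

theorem dSize_sub_dSize {F : Type*} [DecidableEq F] {n : ℕ} {S D : Fin n → Finset F}
    (m : Fin n → F → ℕ) {i : Fin n} (hDS : D i ⊆ S i) :
    dSize S m i - dSize D m i = ∑ t ∈ S i \ D i, m i t := by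
  rw [dSize, dSize, ← Finset.sum_sdiff hDS, Nat.add_sub_cancel]

namespace Polynomial

section CommRing

variable {A : Type*} [CommRing A]

theorem X_pow_dvd_taylor_iff (r : A) (p : A[X]) (w : ℕ) :
    X ^ w ∣ taylor r p ↔ (X - C r) ^ w ∣ p := by
  have hX : taylor r ((X - C r) ^ w) = X ^ w := by simp [taylor_apply, sub_comp]
  rw [← hX]
  exact map_dvd_iff (taylorEquiv r)

theorem map_eq_map_mul_map_divByMonic {B : Type*} [CommRing B] (φ : A →+* B) {p q : A[X]}
    (hq : q.Monic) (hdvd : q.map φ ∣ p.map φ) : p.map φ = q.map φ * (p /ₘ q).map φ := by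
  conv_lhs => rw [← modByMonic_add_div p q]
  rw [Polynomial.map_add, Polynomial.map_mul, map_modByMonic φ hq,
    (modByMonic_eq_zero_iff_dvd (hq.map φ)).2 hdvd, zero_add]

theorem map_dvd_map_mul_iff_of_isCoprime {B : Type*} [CommRing B] (φ : A →+* B) {a b : A[X]}
    (hab : IsCoprime a b) (p : B[X]) : b.map φ ∣ a.map φ * p ↔ b.map φ ∣ p :=
  ⟨(hab.symm.map (mapRingHom φ)).dvd_of_dvd_mul_left, fun hp => hp.mul_left _⟩

theorem map_X_sub_C_pow_dvd_map_mk_iff {F : Type*} [Field F] [Algebra F A] (J : Ideal A)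
    (c : F) (w : ℕ) (p : A[X]) :
    ((X - C c) ^ w).map (algebraMap F (A ⧸ J)) ∣ p.map (Ideal.Quotient.mk J) ↔
      ∀ k < w, (taylor (algebraMap F A c) p).coeff k ∈ J := by
  have hroot : ((X - C c) ^ w).map (algebraMap F (A ⧸ J)) =
      (X - C (Ideal.Quotient.mk J (algebraMap F A c))) ^ w := by
    simp [Ideal.Quotient.mk_algebraMap]
  rw [hroot, ← X_pow_dvd_taylor_iff, ← map_taylor, X_pow_dvd_iff]
  simp only [coeff_map, Ideal.Quotient.eq_zero_iff_mem]

end CommRing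

section MultiRoot

variable {F : Type*} [Field F]

noncomputable def multiRootPoly (T : Finset F) (μ : F → ℕ) : F[X] :=
  ∏ t ∈ T, (X - C t) ^ μ t

theorem monic_multiRootPoly (T : Finset F) (μ : F → ℕ) : (multiRootPoly T μ).Monic :=
  monic_prod_of_monic _ _ fun t _ => (monic_X_sub_C t).pow _

theorem natDegree_multiRootPoly (T : Finset F) (μ : F → ℕ) :
    (multiRootPoly T μ).natDegree = ∑ t ∈ T, μ t := by
  rw [multiRootPoly, natDegree_prod_of_monic _ _ fun t _ => (monic_X_sub_C t).pow _]
  simp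

theorem isCoprime_multiRootPoly {T : Finset F} {c : F} (hc : c ∉ T) (μ : F → ℕ) (w : ℕ) :
    IsCoprime (multiRootPoly T μ) ((X - C c) ^ w) :=
  IsCoprime.prod_left fun _ ht =>
    ((pairwise_coprime_X_sub_C Function.injective_id) (ne_of_mem_of_not_mem ht hc)).pow

theorem map_multiRootPoly_dvd {A : Type*} [CommRing A] (φ : F →+* A) {T : Finset F}
    {μ : F → ℕ} {p : A[X]} (hdvd : ∀ t ∈ T, ((X - C t) ^ μ t).map φ ∣ p) :
    (multiRootPoly T μ).map φ ∣ p := by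
  rw [multiRootPoly, Polynomial.map_prod]
  refine Finset.prod_dvd_of_coprime (fun _ _ _ _ htu => ?_) hdvd
  exact ((pairwise_coprime_X_sub_C Function.injective_id) htu).pow.map (mapRingHom φ)

end MultiRoot

section MapLinear

variable {F A : Type*} [Field F] [CommRing A] [Algebra F A] (L : A →ₗ[F] F)

noncomputable def mapLinear : A[X] →ₗ[F] F[X] :=
  lsum fun j => monomial j ∘ₗ L

@[simp]
theorem coeff_mapLinear (p : A[X]) (k : ℕ) : (mapLinear L p).coeff k = L (p.coeff k) := by
  rw [mapLinear, lsum_apply, sum_def, finsetSum_coeff]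
  simp only [LinearMap.comp_apply, coeff_monomial]
  rw [Finset.sum_ite_eq']
  split_ifs with hk
  · rfl
  · rw [notMem_support_iff.mp hk, map_zero]

theorem mapLinear_monomial (j : ℕ) (a : A) : mapLinear L (monomial j a) = monomial j (L a) := by
  ext k
  rw [coeff_mapLinear, coeff_monomial, coeff_monomial]
  split_ifs <;> simp

theorem mapLinear_C_mul_map (a : A) (Q : F[X]) :
    mapLinear L (C a * Q.map (algebraMap F A)) = C (L a) * Q := by
  ext k
  rw [coeff_mapLinear, coeff_C_mul, coeff_C_mul, coeff_map, mul_comm, ← Algebra.smul_def,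
    map_smul, smul_eq_mul, mul_comm]

theorem mapLinear_map_mul (Q : F[X]) (p : A[X]) :
    mapLinear L (Q.map (algebraMap F A) * p) = Q * mapLinear L p := by
  induction p using Polynomial.induction_on' with
  | add p₁ p₂ h₁ h₂ => rw [mul_add, map_add, map_add, h₁, h₂, mul_add]
  | monomial j a =>
    rw [← C_mul_X_pow_eq_monomial, mul_left_comm, ← Polynomial.map_X (algebraMap F A),
      ← Polynomial.map_pow, ← Polynomial.map_mul, mapLinear_C_mul_map, mapLinear_C_mul_map,
      mul_left_comm]

theorem mapLinear_taylor (c : F) (p : A[X]) :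
    mapLinear L (taylor (algebraMap F A c) p) = taylor c (mapLinear L p) := by
  induction p using Polynomial.induction_on' with
  | add p₁ p₂ h₁ h₂ => rw [map_add, map_add, h₁, h₂, map_add, map_add]
  | monomial j a =>
    have hX : (X + C (algebraMap F A c)) ^ j = ((X + C c) ^ j).map (algebraMap F A) := by simp
    rw [taylor_monomial, hX, mapLinear_C_mul_map, mapLinear_monomial, taylor_monomial]

/-- The index `j` is that of the leading coefficient of `q * mapLinear L (p /ₘ q)`, which the
remainder `p %ₘ q` does not reach. -/
theorem exists_natDegree_le_coeff_ne_zero [Nontrivial A] {q : F[X]} (hq : q.Monic) {p : A[X]}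
    {c : F} {k : ℕ}
    (hk : L ((taylor (algebraMap F A c) (p /ₘ q.map (algebraMap F A))).coeff k) ≠ 0) :
    ∃ j, q.natDegree ≤ j ∧ L (p.coeff j) ≠ 0 := by
  set q' := q.map (algebraMap F A)
  have hq' : q'.Monic := hq.map _
  have hp : p = p %ₘ q' + q' * (p /ₘ q') := (modByMonic_add_div p q').symm
  set h := p /ₘ q'
  have hh : mapLinear L h ≠ 0 := by
    intro h0
    apply hk
    rw [← coeff_mapLinear, mapLinear_taylor, h0, map_zero, coeff_zero]
  set j := q.natDegree + (mapLinear L h).natDegree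
  have hrem : (p %ₘ q').degree < j :=
    calc (p %ₘ q').degree < q'.degree := degree_modByMonic_lt p hq'
      _ ≤ q.degree := degree_map_le
      _ = q.natDegree := degree_eq_natDegree hq.ne_zero
      _ ≤ j := by exact_mod_cast Nat.le_add_right _ _
  refine ⟨j, Nat.le_add_right _ _, ?_⟩
  rw [hp, coeff_add, map_add, coeff_eq_zero_of_degree_lt hrem, map_zero, zero_add,
    ← coeff_mapLinear, mapLinear_map_mul, coeff_mul_degree_add_degree, hq.leadingCoeff, one_mul]
  exact leadingCoeff_ne_zero.2 hh

end MapLinear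

end Polynomial

section

variable {F : Type*} [Field F] {n : ℕ}

theorem MvPolynomial.finSuccEquiv_aeval_X_add_C (c : F) (s : Fin n → F)
    (f : MvPolynomial (Fin (n + 1)) F) :
    finSuccEquiv F n (aeval (fun i => X i + C ((Fin.cons c s : Fin (n + 1) → F) i)) f) =
      (Polynomial.taylor (C c) (finSuccEquiv F n f)).map
        (aeval fun i => X i + C (s i)).toRingHom := by
  have key : (finSuccEquiv F n).toAlgHom.comp
        (aeval fun i => X i + C ((Fin.cons c s : Fin (n + 1) → F) i)) =
      (Polynomial.mapAlgHom (aeval fun i => X i + C (s i))).comp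
        (((Polynomial.taylorAlgHom (C c : MvPolynomial (Fin n) F)).restrictScalars F).comp
          (finSuccEquiv F n).toAlgHom) := by
    refine MvPolynomial.algHom_ext fun i => ?_
    cases i using Fin.cases <;> simp [finSuccEquiv_apply]
  exact DFunLike.congr_fun key f

theorem MvPolynomial.natDegree_add_totalDegree_coeff_taylor_divByMonic_le
    {q : Polynomial F} (hq : q.Monic) (f : MvPolynomial (Fin (n + 1)) F) {c : F} {k : ℕ}
    (hg : (Polynomial.taylor (C c) (finSuccEquiv F n f /ₘ q.map (algebraMap F _))).coeff k ≠ 0) :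
    q.natDegree + ((Polynomial.taylor (C c)
      (finSuccEquiv F n f /ₘ q.map (algebraMap F _))).coeff k).totalDegree ≤ f.totalDegree := by
  set g := (Polynomial.taylor (C c) (finSuccEquiv F n f /ₘ q.map (algebraMap F _))).coeff k
  obtain ⟨w₀, hw₀, hdeg⟩ := Finset.exists_mem_eq_sup g.support
    (Finset.nonempty_iff_ne_empty.2 (support_eq_empty.not.2 hg)) fun s => s.sum fun _ e => e
  obtain ⟨j, hj, hcoeff⟩ := Polynomial.exists_natDegree_le_coeff_ne_zero (lcoeff F w₀) hq
    (c := c) (k := k) (mem_support_iff.1 hw₀)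
  have hPj : (finSuccEquiv F n f).coeff j ≠ 0 := fun h => hcoeff (by simp [h])
  calc q.natDegree + g.totalDegree
      ≤ j + ((finSuccEquiv F n f).coeff j).totalDegree := by
        refine add_le_add hj ?_
        rw [totalDegree, hdeg]
        exact le_totalDegree (mem_support_iff.2 hcoeff)
    _ ≤ f.totalDegree := by
        rw [add_comm]
        exact totalDegree_coeff_finSuccEquiv_add_le f j hPj

/-- Translated to the origin, `I(s, w)` is the monomial ideal `(x_1^{w_1}, …, x_n^{w_n})`. -/
noncomputable def pointIdeal (s : Fin n → F) (w : Fin n → ℕ) : Ideal (MvPolynomial (Fin n) F) :=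
  (Ideal.span ((fun u => monomial u 1) '' Set.range fun i => Finsupp.single i (w i))).comap
    (aeval fun i => X i + C (s i))

theorem mem_pointIdeal {f : MvPolynomial (Fin n) F} {s : Fin n → F} {w : Fin n → ℕ} :
    f ∈ pointIdeal s w ↔ memPointIdeal f s w := by
  rw [pointIdeal, Ideal.mem_comap, mem_ideal_span_monomial_image, memPointIdeal]
  simp only [Set.exists_range_iff, Finsupp.single_le_iff, mem_support_iff, taylorCoeff]
  refine forall_congr' fun u => ?_
  rw [← not_imp_not]
  push Not
  rfl

theorem taylorCoeff_cons (f : MvPolynomial (Fin (n + 1)) F) (c : F) (s : Fin n → F) (k : ℕ)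
    (u : Fin n →₀ ℕ) :
    taylorCoeff f (Fin.cons c s) (u.cons k) =
      taylorCoeff ((Polynomial.taylor (C c) (finSuccEquiv F n f)).coeff k) s u := by
  rw [taylorCoeff, ← finSuccEquiv_coeff_coeff, finSuccEquiv_aeval_X_add_C, Polynomial.coeff_map]
  rfl

theorem mem_pointIdeal_cons_iff (f : MvPolynomial (Fin (n + 1)) F) (c : F) (s : Fin n → F)
    (w₀ : ℕ) (w : Fin n → ℕ) :
    f ∈ pointIdeal (Fin.cons c s) (Fin.cons w₀ w) ↔
      ∀ k < w₀, (Polynomial.taylor (C c) (finSuccEquiv F n f)).coeff k ∈ pointIdeal s w := by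
  simp only [mem_pointIdeal, memPointIdeal]
  constructor
  · intro h k hk u hu
    rw [← taylorCoeff_cons]
    refine h (u.cons k) fun i => ?_
    cases i using Fin.cases <;> simp [hk, hu]
  · intro h u hu
    rw [← Finsupp.cons_tail u, taylorCoeff_cons]
    exact h (u 0) (by simpa using hu 0) u.tail fun j => by
      simpa [Finsupp.tail_apply] using hu j.succ

theorem mem_pointIdeal_cons_iff_dvd (f : MvPolynomial (Fin (n + 1)) F)
    (m : Fin (n + 1) → F → ℕ) (c : F) (t : Fin n → F) :
    f ∈ pointIdeal (Fin.cons c t) (fun i => m i ((Fin.cons c t : Fin (n + 1) → F) i)) ↔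
      ((Polynomial.X - Polynomial.C c) ^ m 0 c).map
          (algebraMap F (MvPolynomial (Fin n) F ⧸ pointIdeal t fun i => m i.succ (t i))) ∣
        (finSuccEquiv F n f).map (Ideal.Quotient.mk _) := by
  rw [Fin.apply_cons_eq_cons, mem_pointIdeal_cons_iff]
  exact (Polynomial.map_X_sub_C_pow_dvd_map_mk_iff _ _ _ _).symm

end

structure PuncturedVanishing {F : Type*} [Field F] {n : ℕ} (S D : Fin n → Finset F)
    (m : Fin n → F → ℕ) (f : MvPolynomial (Fin n) F) : Prop where
  mem_pointIdeal : ∀ s : Fin n → F, (∀ i, s i ∈ S i) → (¬ ∀ i, s i ∈ D i) →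
    f ∈ pointIdeal s fun i => m i (s i)
  exists_not_mem : ∃ s : Fin n → F, (∀ i, s i ∈ D i) ∧ f ∉ pointIdeal s fun i => m i (s i)

namespace PuncturedVanishing

variable {F : Type*} [Field F] {n : ℕ} {S D : Fin (n + 1) → Finset F} {m : Fin (n + 1) → F → ℕ}
  {f : MvPolynomial (Fin (n + 1)) F}

theorem map_X_sub_C_pow_dvd (hf : PuncturedVanishing S D m f) {c : F} (hc : c ∈ S 0)
    {t : Fin n → F} (ht : ∀ i, t i ∈ S i.succ) (hcD : c ∉ D 0 ∨ ¬ ∀ i, t i ∈ D i.succ) :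
    ((Polynomial.X - Polynomial.C c) ^ m 0 c).map
        (algebraMap F (MvPolynomial (Fin n) F ⧸ pointIdeal t fun i => m i.succ (t i))) ∣
      (finSuccEquiv F n f).map (Ideal.Quotient.mk _) := by
  refine (mem_pointIdeal_cons_iff_dvd f m c t).1 <| hf.mem_pointIdeal (Fin.cons c t)
    (fun i => by cases i using Fin.cases <;> simp [*]) fun hD => ?_
  rcases hcD with hcD | hcD
  · exact hcD (by simpa using hD 0)
  · exact hcD fun i => by simpa using hD i.succ

theorem map_finSuccEquiv_eq_mul [DecidableEq F] (hf : PuncturedVanishing S D m f)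
    {t : Fin n → F} (ht : ∀ i, t i ∈ S i.succ) :
    (finSuccEquiv F n f).map (Ideal.Quotient.mk (pointIdeal t fun i => m i.succ (t i))) =
      (Polynomial.multiRootPoly (S 0 \ D 0) (m 0)).map (algebraMap F _) *
        (finSuccEquiv F n f /ₘ
          (Polynomial.multiRootPoly (S 0 \ D 0) (m 0)).map (algebraMap F _)).map
            (Ideal.Quotient.mk _) := by
  have hq := (Polynomial.monic_multiRootPoly (S 0 \ D 0) (m 0)).map
    (algebraMap F (MvPolynomial (Fin n) F))
  rw [Polynomial.map_eq_map_mul_map_divByMonic _ hq]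
  · rw [Polynomial.map_map, Ideal.Quotient.mk_comp_algebraMap]
  rw [Polynomial.map_map, Ideal.Quotient.mk_comp_algebraMap]
  refine Polynomial.map_multiRootPoly_dvd _ fun c hc => ?_
  rw [Finset.mem_sdiff] at hc
  exact hf.map_X_sub_C_pow_dvd hc.1 ht (Or.inl hc.2)

theorem map_X_sub_C_pow_dvd_iff [DecidableEq F] (hf : PuncturedVanishing S D m f)
    {t : Fin n → F} (ht : ∀ i, t i ∈ S i.succ) {c : F} (hc : c ∉ S 0 \ D 0) (w : ℕ) :
    ((Polynomial.X - Polynomial.C c) ^ w).map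
        (algebraMap F (MvPolynomial (Fin n) F ⧸ pointIdeal t fun i => m i.succ (t i))) ∣
      (finSuccEquiv F n f).map (Ideal.Quotient.mk _) ↔
    ((Polynomial.X - Polynomial.C c) ^ w).map
        (algebraMap F (MvPolynomial (Fin n) F ⧸ pointIdeal t fun i => m i.succ (t i))) ∣
      (finSuccEquiv F n f /ₘ
          (Polynomial.multiRootPoly (S 0 \ D 0) (m 0)).map (algebraMap F _)).map
        (Ideal.Quotient.mk _) := by
  rw [hf.map_finSuccEquiv_eq_mul ht, Polynomial.map_dvd_map_mul_iff_of_isCoprime _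
    (Polynomial.isCoprime_multiRootPoly hc (m 0) w)]

theorem exists_tail_add_totalDegree_le (hf : PuncturedVanishing S D m f)
    (hDS : ∀ i, D i ⊆ S i) :
    ∃ g : MvPolynomial (Fin n) F, PuncturedVanishing (Fin.tail S) (Fin.tail D) (Fin.tail m) g ∧
      dSize S m 0 - dSize D m 0 + g.totalDegree ≤ f.totalDegree := by
  classical
  obtain ⟨s, hsD, hs⟩ := hf.exists_not_mem
  obtain ⟨c, t₀, rfl⟩ : ∃ c t₀, s = Fin.cons c t₀ :=
    ⟨s 0, Fin.tail s, (Fin.cons_self_tail s).symm⟩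
  have hcD : c ∈ D 0 := by simpa using hsD 0
  have ht₀D : ∀ i, t₀ i ∈ D i.succ := fun i => by simpa using hsD i.succ
  have hc : c ∉ S 0 \ D 0 := fun h => (Finset.mem_sdiff.1 h).2 hcD
  set h := finSuccEquiv F n f /ₘ
    (Polynomial.multiRootPoly (S 0 \ D 0) (m 0)).map (algebraMap F (MvPolynomial (Fin n) F))
  have hexc : ¬ ∀ k < m 0 c, (Polynomial.taylor (C c) h).coeff k ∈
      pointIdeal t₀ fun i => m i.succ (t₀ i) := by
    rwa [mem_pointIdeal_cons_iff_dvd, hf.map_X_sub_C_pow_dvd_iff (fun i => hDS _ (ht₀D i)) hc,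
      Polynomial.map_X_sub_C_pow_dvd_map_mk_iff] at hs
  push Not at hexc
  obtain ⟨k, hk, hg⟩ := hexc
  refine ⟨(Polynomial.taylor (C c) h).coeff k, ⟨fun t ht htD => ?_, t₀, ht₀D, hg⟩, ?_⟩
  · have hdvd := (hf.map_X_sub_C_pow_dvd_iff ht hc _).1
      (hf.map_X_sub_C_pow_dvd (hDS 0 hcD) ht (Or.inr htD))
    exact (Polynomial.map_X_sub_C_pow_dvd_map_mk_iff _ _ _ _).1 hdvd k hk
  · rw [dSize_sub_dSize m (hDS 0), ← Polynomial.natDegree_multiRootPoly]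
    exact natDegree_add_totalDegree_coeff_taylor_divByMonic_le
      (Polynomial.monic_multiRootPoly _ _) f fun h0 => hg (h0 ▸ Ideal.zero_mem _)

theorem sum_sub_le_totalDegree :
    ∀ {n : ℕ} {S D : Fin n → Finset F} {m : Fin n → F → ℕ} {f : MvPolynomial (Fin n) F},
      PuncturedVanishing S D m f → (∀ i, D i ⊆ S i) →
        ∑ i, (dSize S m i - dSize D m i) ≤ f.totalDegree
  | 0, _, _, _, _, _, _ => by simp
  | _ + 1, _, _, _, _, hf, hDS => by
    obtain ⟨g, hg, hdeg⟩ := hf.exists_tail_add_totalDegree_le hDS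
    rw [Fin.sum_univ_succ]
    exact (Nat.add_le_add_left (sum_sub_le_totalDegree hg fun i => hDS i.succ) _).trans hdeg

end PuncturedVanishing

theorem stmt_7_general {F : Type*} [Field F] {n : ℕ}
    (S : Fin n → Finset F)
    (m : Fin n → F → ℕ)
    (D : Fin n → Finset F) (hDS : ∀ i, D i ⊆ S i)
    (f : MvPolynomial (Fin n) F)
    (hvan : ∀ s : Fin n → F, (∀ i, s i ∈ S i) → (¬ ∀ i, s i ∈ D i) →
      memPointIdeal f s fun i => m i (s i))
    (hexc : ∃ s : Fin n → F, (∀ i, s i ∈ D i) ∧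
      ¬ memPointIdeal f s fun i => m i (s i)) :
    ∑ i, (dSize S m i - dSize D m i) ≤ f.totalDegree :=
  PuncturedVanishing.sum_sub_le_totalDegree
    ⟨fun s hS hD => mem_pointIdeal.2 (hvan s hS hD),
      hexc.imp fun _ hs => ⟨hs.1, mt mem_pointIdeal.1 hs.2⟩⟩ hDS

/-- The punctured (Ball–Serra) theorem for multisets, degree bound: if `f` lies in
`I(s, m(s))` for every `s ∈ S` outside `D = D_1 × ⋯ × D_n` but `f ∉ I(s*, m(s*))` for
some `s* ∈ D`, then `deg f ≥ Σ_i (d(S_i) - d(D_i))`. -/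
theorem stmt_7 {F : Type*} [Field F] {n : ℕ} (hn : 1 ≤ n)
    (S : Fin n → Finset F) (hS : ∀ i, (S i).Nonempty)
    (m : Fin n → F → ℕ) (hm : ∀ i, ∀ s ∈ S i, 1 ≤ m i s)
    (D : Fin n → Finset F) (hD : ∀ i, (D i).Nonempty) (hDS : ∀ i, D i ⊆ S i)
    (f : MvPolynomial (Fin n) F)
    (hvan : ∀ s : Fin n → F, (∀ i, s i ∈ S i) → (¬ ∀ i, s i ∈ D i) →
      memPointIdeal f s fun i => m i (s i))
    (hexc : ∃ s : Fin n → F, (∀ i, s i ∈ D i) ∧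
      ¬ memPointIdeal f s fun i => m i (s i)) :
    ∑ i, (dSize S m i - dSize D m i) ≤ f.totalDegree :=
  stmt_7_general S m D hDS f hvan hexc
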